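/- Let 0 < σ < 1, β ∈ ℝ, 0 < ε < 1, and let f_ε be the local regularization of f(ρ) = β ρ^σ given by f_ε(ρ) = f(ρ) for ρ ≥ ε² and f_ε(ρ) = ρ Q_ε(ρ) for 0 ≤ ρ < ε², where Q_ε(ρ) = β ε^{2σ-2} Σ_{j=0}^{3} C(j-σ, j) (1 - ρ/ε²)^j with generalized binomial coefficients C(j-σ, j). Then there is a constant C₁ depending only on σ and β such that |f_ε(ρ)| + |ρ f_ε'(ρ)| ≤ C₁ ρ^σ for all ρ ≥ 0. -/

import Mathlib

/-!
Put `a = ε²`. For `ρ < a` and `t = 1 - ρ / a ∈ [0, 1]` one has `f_ε(ρ) = β a^(σ-1) ρ P(t)`, where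
`P` is the cubic Taylor polynomial of `(1 - t)^(σ-1)` at `0`. For `0 ≤ σ ≤ 1` its coefficients lie
in `[0, 1]`, so `|P| ≤ 4` and `|P'| ≤ 6` on `[0, 1]`, and `a^(σ-1) ρ ≤ ρ^σ` because `σ - 1 ≤ 0`.
Since `P(0) = 1` and `P'(0) = 1 - σ`, the two branches of `f_ε` have the same value and the same
derivative at `ρ = a`; above `a` the bound is immediate.
-/

/-- Generalized binomial coefficient `binom(x, j) = x(x-1)⋯(x-j+1)/j!`. -/
noncomputable def gbinom (x : ℝ) (j : ℕ) : ℝ :=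
  (∏ i ∈ Finset.range j, (x - i)) / (Nat.factorial j)

/-- The cubic polynomial `Q_ε(ρ) = β ε^{2σ-2} Σ_{j=0}^{3} binom(j-σ, j)(1-ρ/ε²)^j`. -/
noncomputable def Qreg (σ β ε ρ : ℝ) : ℝ :=
  β * ε ^ (2 * σ - 2) *
    ∑ j ∈ Finset.range 4, gbinom ((j : ℝ) - σ) j * (1 - ρ / ε ^ 2) ^ j

/-- The local regularization `f_ε` of `f(ρ) = β ρ^σ`. -/
noncomputable def freg (σ β ε ρ : ℝ) : ℝ :=
  if ε ^ 2 ≤ ρ then β * ρ ^ σ else ρ * Qreg σ β ε ρ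

open Real Set Filter

noncomputable def regCubic (σ t : ℝ) : ℝ :=
  1 + (1 - σ) * t + (2 - σ) * (1 - σ) / 2 * t ^ 2 + (3 - σ) * (2 - σ) * (1 - σ) / 6 * t ^ 3

noncomputable def regCubicDeriv (σ t : ℝ) : ℝ :=
  (1 - σ) + (2 - σ) * (1 - σ) * t + (3 - σ) * (2 - σ) * (1 - σ) / 2 * t ^ 2

lemma hasDerivAt_regCubic (σ t : ℝ) : HasDerivAt (regCubic σ) (regCubicDeriv σ t) t := by
  have h := ((((hasDerivAt_id t).const_mul (1 - σ)).add
    (((hasDerivAt_pow 2 t).const_mul ((2 - σ) * (1 - σ) / 2)))).add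
    ((hasDerivAt_pow 3 t).const_mul ((3 - σ) * (2 - σ) * (1 - σ) / 6))).const_add 1
  refine (h.congr_deriv ?_).congr_of_eventuallyEq (.of_forall fun x => ?_)
  · simp only [regCubicDeriv]; norm_num; ring
  · simp only [regCubic, Pi.add_apply, id]; ring

section CubicBounds

variable {σ t : ℝ} (hσ0 : 0 ≤ σ) (hσ1 : σ ≤ 1) (ht0 : 0 ≤ t) (ht1 : t ≤ 1)
include hσ0 hσ1 ht0 ht1

lemma abs_regCubic_le_four : |regCubic σ t| ≤ 4 := by
  have ht2 : t ^ 2 ≤ 1 := pow_le_one₀ ht0 ht1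
  have ht3 : t ^ 3 ≤ 1 := pow_le_one₀ ht0 ht1
  unfold regCubic
  rw [abs_le]
  constructor <;> nlinarith [mul_nonneg (sub_nonneg.2 hσ1) ht0, mul_nonneg hσ0 ht0,
    mul_nonneg (mul_nonneg hσ0 (sub_nonneg.2 hσ1)) (pow_nonneg ht0 2),
    mul_nonneg (mul_nonneg hσ0 (sub_nonneg.2 hσ1)) (pow_nonneg ht0 3)]

lemma abs_regCubicDeriv_le_six : |regCubicDeriv σ t| ≤ 6 := by
  have ht2 : t ^ 2 ≤ 1 := pow_le_one₀ ht0 ht1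
  unfold regCubicDeriv
  rw [abs_le]
  constructor <;> nlinarith [mul_nonneg (sub_nonneg.2 hσ1) ht0, mul_nonneg hσ0 ht0,
    mul_nonneg (mul_nonneg hσ0 (sub_nonneg.2 hσ1)) ht0,
    mul_nonneg (mul_nonneg hσ0 (sub_nonneg.2 hσ1)) (pow_nonneg ht0 2)]

end CubicBounds

lemma rpow_two_mul_sub_two {ε : ℝ} (hε : 0 ≤ ε) (σ : ℝ) : ε ^ (2 * σ - 2) = (ε ^ 2) ^ (σ - 1) := by
  rw [← rpow_natCast, ← rpow_mul hε]
  push_cast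
  ring_nf

lemma Qreg_eq_regCubic {ε : ℝ} (hε : 0 ≤ ε) (σ β : ℝ) :
    Qreg σ β ε = fun ρ => β * (ε ^ 2) ^ (σ - 1) * regCubic σ (1 - ρ / ε ^ 2) := by
  ext ρ
  simp only [Qreg, regCubic, gbinom, Finset.sum_range_succ, Finset.sum_range_zero,
    Finset.prod_range_succ, Finset.prod_range_zero, Nat.factorial, rpow_two_mul_sub_two hε]
  push_cast
  ring

lemma hasDerivAt_mul_regCubic (σ β a ρ : ℝ) :
    HasDerivAt (fun x => x * (β * a ^ (σ - 1) * regCubic σ (1 - x / a)))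
      (β * a ^ (σ - 1) * (regCubic σ (1 - ρ / a) - ρ / a * regCubicDeriv σ (1 - ρ / a))) ρ := by
  have hinner : HasDerivAt (fun x => 1 - x / a) (-(1 / a)) ρ := by
    simpa using ((hasDerivAt_id ρ).div_const a).const_sub 1
  have h := (hasDerivAt_id ρ).mul
    (((hasDerivAt_regCubic σ (1 - ρ / a)).comp ρ hinner).const_mul (β * a ^ (σ - 1)))
  refine h.congr_deriv ?_
  simp only [Function.comp_apply, id]
  ring

lemma rpow_sub_one_mul_le_rpow {a ρ σ : ℝ} (hσ : σ ≤ 1) (hρ : 0 ≤ ρ) (hρa : ρ ≤ a) :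
    a ^ (σ - 1) * ρ ≤ ρ ^ σ := by
  rcases hρ.eq_or_lt with rfl | hρ
  · simpa using rpow_nonneg le_rfl σ
  calc a ^ (σ - 1) * ρ ≤ ρ ^ (σ - 1) * ρ :=
        mul_le_mul_of_nonneg_right (rpow_le_rpow_of_nonpos hρ hρa (by linarith)) hρ.le
    _ = ρ ^ σ := by rw [rpow_sub_one hρ.ne', div_mul_cancel₀ _ hρ.ne']

section Regularization

variable {σ β ε : ℝ} (hε : 0 < ε)
include hε

lemma freg_eqOn_Iic :
    EqOn (freg σ β ε) (fun x => x * (β * (ε ^ 2) ^ (σ - 1) * regCubic σ (1 - x / ε ^ 2)))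
      (Iic (ε ^ 2)) := by
  intro x hx
  rcases (mem_Iic.1 hx).lt_or_eq with hlt | rfl
  · simp [freg, hlt.not_ge, Qreg_eq_regCubic hε.le]
  · have hε2 : ε ^ 2 ≠ 0 := by positivity
    simp only [freg, le_refl, if_true, div_self hε2, sub_self, regCubic, rpow_sub_one hε2]
    field_simp
    ring

lemma hasDerivAt_freg_of_lt {ρ : ℝ} (hρ : ρ < ε ^ 2) :
    HasDerivAt (freg σ β ε) (β * (ε ^ 2) ^ (σ - 1) *
      (regCubic σ (1 - ρ / ε ^ 2) - ρ / ε ^ 2 * regCubicDeriv σ (1 - ρ / ε ^ 2))) ρ :=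
  (hasDerivAt_mul_regCubic σ β (ε ^ 2) ρ).congr_of_eventuallyEq
    (freg_eqOn_Iic hε |>.eventuallyEq_of_mem (Iic_mem_nhds hρ))

lemma hasDerivAt_freg_of_le {ρ : ℝ} (hρ : ε ^ 2 ≤ ρ) :
    HasDerivAt (freg σ β ε) (β * (σ * ρ ^ (σ - 1))) ρ := by
  have hpow : HasDerivAt (fun x => β * x ^ σ) (β * (σ * ρ ^ (σ - 1))) ρ :=
    (hasDerivAt_rpow_const (Or.inl ((by positivity : (0:ℝ) < ε ^ 2).trans_le hρ).ne')).const_mul β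
  have hright : HasDerivWithinAt (freg σ β ε) (β * (σ * ρ ^ (σ - 1))) (Ici (ε ^ 2)) ρ :=
    hpow.hasDerivWithinAt.congr (fun x hx => if_pos hx) (if_pos hρ)
  rcases hρ.lt_or_eq with hlt | rfl
  · exact hright.hasDerivAt (Ici_mem_nhds hlt)
  have hleft :
      HasDerivWithinAt (freg σ β ε) (β * (σ * (ε ^ 2) ^ (σ - 1))) (Iic (ε ^ 2)) (ε ^ 2) := by
    have h := (hasDerivAt_mul_regCubic σ β (ε ^ 2) (ε ^ 2)).hasDerivWithinAt (s := Iic (ε ^ 2))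
    refine (h.congr (freg_eqOn_Iic hε) (freg_eqOn_Iic hε self_mem_Iic)).congr_deriv ?_
    have hε2 : ε ^ 2 ≠ 0 := by positivity
    simp only [div_self hε2, sub_self, regCubic, regCubicDeriv]
    ring
  simpa using hleft.union hright

lemma abs_freg_add_abs_mul_deriv_le_of_lt {ρ : ℝ} (hσ0 : 0 ≤ σ) (hσ1 : σ ≤ 1) (hρ0 : 0 ≤ ρ)
    (hρ : ρ < ε ^ 2) :
    |freg σ β ε ρ| + |ρ * deriv (freg σ β ε) ρ| ≤ 14 * |β| * ρ ^ σ := by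
  have hε2 : 0 < ε ^ 2 := by positivity
  have hs0 : 0 ≤ ρ / ε ^ 2 := div_nonneg hρ0 hε2.le
  have hs1 : ρ / ε ^ 2 ≤ 1 := (div_le_one hε2).2 hρ.le
  have hP := abs_regCubic_le_four hσ0 hσ1 (sub_nonneg.2 hs1) (sub_le_self _ hs0)
  have hP' := abs_regCubicDeriv_le_six hσ0 hσ1 (sub_nonneg.2 hs1) (sub_le_self _ hs0)
  have hA : 0 ≤ (ε ^ 2) ^ (σ - 1) := rpow_nonneg hε2.le _
  rw [freg_eqOn_Iic hε hρ.le, (hasDerivAt_freg_of_lt hε hρ).deriv]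
  set P := regCubic σ (1 - ρ / ε ^ 2)
  set P' := regCubicDeriv σ (1 - ρ / ε ^ 2)
  have hdiff : |P - ρ / ε ^ 2 * P'| ≤ 10 := by
    calc |P - ρ / ε ^ 2 * P'| ≤ |P| + ρ / ε ^ 2 * |P'| :=
          (abs_sub _ _).trans_eq (by rw [abs_mul, abs_of_nonneg hs0])
      _ ≤ 4 + 1 * 6 := by gcongr
      _ = 10 := by norm_num
  calc |ρ * (β * (ε ^ 2) ^ (σ - 1) * P)| + |ρ * (β * (ε ^ 2) ^ (σ - 1) * (P - ρ / ε ^ 2 * P'))|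
      = |β| * ((ε ^ 2) ^ (σ - 1) * ρ) * (|P| + |P - ρ / ε ^ 2 * P'|) := by
        simp only [abs_mul, abs_of_nonneg hρ0, abs_of_nonneg hA]; ring
    _ ≤ |β| * ρ ^ σ * (4 + 10) := by
        gcongr
        exact rpow_sub_one_mul_le_rpow hσ1 hρ0 hρ.le
    _ = 14 * |β| * ρ ^ σ := by ring

lemma abs_freg_add_abs_mul_deriv_le_of_le {ρ : ℝ} (hσ0 : 0 ≤ σ) (hσ1 : σ ≤ 1) (hρ : ε ^ 2 ≤ ρ) :
    |freg σ β ε ρ| + |ρ * deriv (freg σ β ε) ρ| ≤ 2 * |β| * ρ ^ σ := by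
  have hρ0 : 0 < ρ := (by positivity : (0:ℝ) < ε ^ 2).trans_le hρ
  rw [(hasDerivAt_freg_of_le hε hρ).deriv, freg, if_pos hρ]
  have hρσ : ρ * (β * (σ * ρ ^ (σ - 1))) = σ * (β * ρ ^ σ) := by
    rw [rpow_sub_one hρ0.ne']; field_simp
  rw [hρσ]
  calc |β * ρ ^ σ| + |σ * (β * ρ ^ σ)| = (1 + σ) * (|β| * ρ ^ σ) := by
        simp only [abs_mul, abs_of_nonneg hσ0, abs_of_nonneg (rpow_nonneg hρ0.le σ)]; ring
    _ ≤ 2 * (|β| * ρ ^ σ) := by gcongr; linarith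
    _ = 2 * |β| * ρ ^ σ := by ring

end Regularization

/-- `|f_ε(ρ)| + |ρ f_ε'(ρ)| ≤ C₁ ρ^σ` for all `ρ ≥ 0`, `C₁` depending only on `σ, β`. -/
theorem stmt8 (σ β : ℝ) (hσ0 : 0 < σ) (hσ1 : σ < 1) :
    ∃ C₁ : ℝ, 0 < C₁ ∧ ∀ ε : ℝ, 0 < ε → ε < 1 → ∀ ρ : ℝ, 0 ≤ ρ →
      |freg σ β ε ρ| + |ρ * deriv (freg σ β ε) ρ| ≤ C₁ * ρ ^ σ := by
  refine ⟨14 * |β| + 1, by positivity, fun ε hε _ ρ hρ => ?_⟩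
  have hbound : |freg σ β ε ρ| + |ρ * deriv (freg σ β ε) ρ| ≤ 14 * |β| * ρ ^ σ := by
    rcases lt_or_ge ρ (ε ^ 2) with hlt | hge
    · exact abs_freg_add_abs_mul_deriv_le_of_lt hε hσ0.le hσ1.le hρ hlt
    · calc _ ≤ 2 * |β| * ρ ^ σ := abs_freg_add_abs_mul_deriv_le_of_le hε hσ0.le hσ1.le hge
        _ ≤ 14 * |β| * ρ ^ σ := by gcongr; norm_num
  calc _ ≤ 14 * |β| * ρ ^ σ := hbound
    _ ≤ (14 * |β| + 1) * ρ ^ σ := by gcongr; linarith
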